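/- arXiv:2110.03821 — 3 statements merged into one kernel-verified Lean document; each statement's English description precedes it below -/
import Mathlib

section
/- Let G be a ternary relation symbol, R a binary relation symbol, and A a unary relation symbol. Let φ := ∃x∃y∃z (G(x,y,z) ∧ R(x,y) ∧ R(y,z) ∧ R(z,x)) and ψ := ∀x∀y (R(x,y) → (A(x) ↔ ¬A(y))). Then φ ⊨ ¬ψ (both φ and ¬ψ are one-dimensional GF sentences), but there is no one-dimensional GF sentence χ over the shared vocabulary {R} such that φ ⊨ χ and χ ⊨ ¬ψ. -/
set_option autoImplicit false

/-! Relational vocabularies: a signature is a type of relation symbols together with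
(positive) arities.  A vocabulary is a set of relation symbols of a signature. -/
structure Sig where
  Rel : Type
  arity : Rel → ℕ
  arity_pos : ∀ R, 0 < arity R

namespace GFP

variable {S : Sig}

/-- Atomic formulas: equalities between variables and relational atoms.
Variables are natural numbers. -/
inductive Atom (S : Sig) : Type where
  | eq : ℕ → ℕ → Atom S
  | rel : (R : S.Rel) → (Fin (S.arity R) → ℕ) → Atom S

def Atom.vars : Atom S → Finset ℕ
  | .eq i j => {i, j}
  | .rel _ ts => Finset.image ts Finset.univ

def Atom.syms : Atom S → Set S.Rel
  | .eq _ _ => ∅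
  | .rel R _ => {R}

/-- Syntax of the guarded fragment: atoms, negation, conjunction and guarded
existential quantification `exg ys α ψ`, standing for `∃ ys (α ∧ ψ)` where `α` is
an atomic guard. -/
inductive GFml (S : Sig) : Type where
  | atom : Atom S → GFml S
  | neg : GFml S → GFml S
  | and : GFml S → GFml S → GFml S
  | exg : List ℕ → Atom S → GFml S → GFml S

namespace GFml

def freeVars : GFml S → Finset ℕ
  | atom a => a.vars
  | neg φ => φ.freeVars
  | and φ ψ => φ.freeVars ∪ ψ.freeVars
  | exg ys a φ => (a.vars ∪ φ.freeVars) \ ys.toFinset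

def syms : GFml S → Set S.Rel
  | atom a => a.syms
  | neg φ => φ.syms
  | and φ ψ => φ.syms ∪ ψ.syms
  | exg _ a φ => a.syms ∪ φ.syms

/-- Well-formedness of guarded quantification: the quantified variables and all free
variables of the body occur in the guard. -/
def WF : GFml S → Prop
  | atom _ => True
  | neg φ => φ.WF
  | and φ ψ => φ.WF ∧ ψ.WF
  | exg ys a φ => φ.WF ∧ φ.freeVars ⊆ a.vars ∧ ys.toFinset ⊆ a.vars

def QFree : GFml S → Prop
  | atom _ => True
  | neg φ => φ.QFree
  | and φ ψ => φ.QFree ∧ ψ.QFree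
  | exg _ _ _ => False

/-- One-dimensionality: each guarded quantification block leaves at most one
variable free. -/
def OneDim : GFml S → Prop
  | atom _ => True
  | neg φ => φ.OneDim
  | and φ ψ => φ.OneDim ∧ ψ.OneDim
  | exg ys a φ => φ.OneDim ∧ (freeVars (exg ys a φ)).card ≤ 1

/-- Subformulas, where a guarded quantification `∃ȳ(α ∧ ψ)` has as subformulas
itself together with the subformulas of `α ∧ ψ`. -/
def subf : GFml S → List (GFml S)
  | atom a => [atom a]
  | neg φ => neg φ :: φ.subf
  | and φ ψ => and φ ψ :: (φ.subf ++ ψ.subf)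
  | exg ys a φ => exg ys a φ :: and (atom a) φ :: atom a :: φ.subf

end GFml

/-- A structure for the signature `S` with domain `D` (interpreting every relation
symbol of `S`). -/
def Str (S : Sig) (D : Type) : Type := (R : S.Rel) → (Fin (S.arity R) → D) → Prop

def Atom.Realize {D : Type} (A : Str S D) (v : ℕ → D) : Atom S → Prop
  | .eq i j => v i = v j
  | .rel R ts => A R fun k => v (ts k)

def GFml.Realize {D : Type} (A : Str S D) (v : ℕ → D) : GFml S → Prop
  | .atom a => a.Realize A v
  | .neg φ => ¬ φ.Realize A v
  | .and φ ψ => φ.Realize A v ∧ ψ.Realize A v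
  | .exg ys a φ =>
      ∃ w : ℕ → D, (∀ x, x ∉ ys → w x = v x) ∧ a.Realize A w ∧ φ.Realize A w

/-- Relative `X`-atoms. -/
def RelAtom (X : Finset ℕ) (ψ : GFml S) : Prop :=
  ψ.freeVars = ∅ ∨
  (∃ x ∈ X, ψ.freeVars = {x}) ∨
  (∃ x ∈ X, ∃ y ∈ X, ψ = .atom (.eq x y)) ∨
  (∃ (R : S.Rel) (ts : Fin (S.arity R) → ℕ), ψ = .atom (.rel R ts) ∧ ψ.freeVars = X) ∨
  (∃ ys a χ, ψ = .exg ys a χ ∧ ψ.freeVars = X)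

/-- Boolean combinations of formulas satisfying `P`. -/
inductive BoolComb (P : GFml S → Prop) : GFml S → Prop where
  | base {φ} : P φ → BoolComb P φ
  | neg {φ} : BoolComb P φ → BoolComb P (.neg φ)
  | and {φ ψ} : BoolComb P φ → BoolComb P ψ → BoolComb P (.and φ ψ)

/-- Uniformity: every subformula is a Boolean combination of relative `X`-atoms,
where `X` is its set of free variables. -/
def GFml.Uniform (φ : GFml S) : Prop :=
  ∀ ψ ∈ φ.subf, BoolComb (RelAtom ψ.freeVars) ψ

/-- Membership in `GF[σ]`. -/
def IsGF (σ : Set S.Rel) (φ : GFml S) : Prop := φ.WF ∧ φ.syms ⊆ σ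

/-- Membership in the uniform one-dimensional guarded fragment `GUF1[σ]`. -/
def IsGUF1 (σ : Set S.Rel) (φ : GFml S) : Prop := IsGF σ φ ∧ φ.OneDim ∧ φ.Uniform

/-- Membership in the uniform guarded fragment `UGF[σ]`. -/
def IsUGF (σ : Set S.Rel) (φ : GFml S) : Prop := IsGF σ φ ∧ φ.Uniform

def GFml.Sentence (φ : GFml S) : Prop := φ.freeVars = ∅

/-- Semantic entailment `φ ⊨ ψ`. -/
def Entails (φ ψ : GFml S) : Prop :=
  ∀ (D : Type) (_ : Nonempty D) (A : Str S D) (v : ℕ → D), φ.Realize A v → ψ.Realize A v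

/-- Truth of a sentence in a structure. -/
def Sat {D : Type} (A : Str S D) (φ : GFml S) : Prop := ∀ v : ℕ → D, φ.Realize A v

def Satisfiable (φ : GFml S) : Prop :=
  ∃ (D : Type) (_ : Nonempty D) (A : Str S D), Sat A φ

/-! ### Uniform partial isomorphisms, live sets and uniform guarded bisimulations -/

/-- `p` (a finite nonempty functional and injective graph) is a uniform partial
`σ`-isomorphism between `A` and `B`: it preserves the table of (an enumeration of)
its domain, i.e. all `σ`-atoms using all elements of the domain or a single one. -/
def IsUPIso (σ : Set S.Rel) {D₁ D₂ : Type} (A : Str S D₁) (B : Str S D₂)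
    (p : Set (D₁ × D₂)) : Prop :=
  p.Finite ∧ p.Nonempty ∧
  (∀ a b b', (a, b) ∈ p → (a, b') ∈ p → b = b') ∧
  (∀ a a' b, (a, b) ∈ p → (a', b) ∈ p → a = a') ∧
  ∀ R ∈ σ, ∀ t : Fin (S.arity R) → D₁ × D₂,
    (∀ j, t j ∈ p) →
    ((∀ x ∈ p, ∃ j, t j = x) ∨ ∀ j j', t j = t j') →
    (A R (fun j => (t j).1) ↔ B R fun j => (t j).2)

/-- `σ`-live subsets of a structure: (nonempty) singletons and sets of elements of
a tuple realizing some relation in `σ`. -/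
def Live (σ : Set S.Rel) {D : Type} (A : Str S D) (X : Set D) : Prop :=
  X.Nonempty ∧
    (X.Subsingleton ∨ ∃ R ∈ σ, ∃ t : Fin (S.arity R) → D, A R t ∧ X = Set.range t)

/-- Uniform guarded `σ`-bisimulation between `A` and `B` (back and forth conditions). -/
def IsBisim (σ : Set S.Rel) {D₁ D₂ : Type} (A : Str S D₁) (B : Str S D₂)
    (Z : Set (Set (D₁ × D₂))) : Prop :=
  Z.Nonempty ∧ (∀ p ∈ Z, IsUPIso σ A B p) ∧
  (∀ p ∈ Z, ∀ a b, (a, b) ∈ p → ∀ X' : Set D₁, Live σ A X' → a ∈ X' →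
    ∃ q ∈ Z, {x | ∃ y, (x, y) ∈ q} = X' ∧ (a, b) ∈ q) ∧
  (∀ p ∈ Z, ∀ a b, (a, b) ∈ p → ∀ Y' : Set D₂, Live σ B Y' → b ∈ Y' →
    ∃ q ∈ Z, {y | ∃ x, (x, y) ∈ q} = Y' ∧ (a, b) ∈ q)

/-- Uniform guarded `σ`-bisimulation between `(A, c̄)` and `(B, d̄)`: additionally
the cover condition, i.e. some `h ∈ Z` has domain exactly `c̄` and maps `c̄` to `d̄`. -/
def IsBisimPair (σ : Set S.Rel) {D₁ D₂ : Type} (A : Str S D₁) (B : Str S D₂)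
    {n : ℕ} (c : Fin n → D₁) (d : Fin n → D₂) (Z : Set (Set (D₁ × D₂))) : Prop :=
  IsBisim σ A B Z ∧
    ∃ h ∈ Z, (∀ i, (c i, d i) ∈ h) ∧ ∀ x y, (x, y) ∈ h → ∃ i, x = c i

/-- The convention `φ(x₁,…,xₙ)`: the set of free variables of `φ` is exactly
`{x₁,…,xₙ}`, or `φ` has at most one free variable belonging to `{x₁,…,xₙ}`, or `φ`
is an equality between two of the variables `x₁,…,xₙ`.  (Variables `x₁,…,xₙ` are
represented by `0,…,n-1`.) -/
def FVConv (n : ℕ) (φ : GFml S) : Prop :=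
  φ.freeVars = Finset.range n ∨ (∃ i < n, φ.freeVars ⊆ {i}) ∨
    ∃ i < n, ∃ j < n, φ = .atom (.eq i j)

/-- `(A, c̄) ≡σ (B, d̄)`: the two pointed structures agree on all `GUF1[σ]` formulas
`φ(x₁,…,xₙ)`. -/
def GUF1EquivAt (σ : Set S.Rel) {D₁ D₂ : Type} (A : Str S D₁) (B : Str S D₂)
    {n : ℕ} (c : Fin n → D₁) (d : Fin n → D₂) : Prop :=
  ∀ φ : GFml S, IsGUF1 σ φ → FVConv n φ →
    ∀ (v : ℕ → D₁) (w : ℕ → D₂),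
      (∀ i : Fin n, v i.1 = c i) → (∀ i : Fin n, w i.1 = d i) →
      (φ.Realize A v ↔ φ.Realize B w)

/-! ### Full first-order logic and ω-saturation -/

inductive FO (S : Sig) : Type where
  | atom : Atom S → FO S
  | neg : FO S → FO S
  | and : FO S → FO S → FO S
  | ex : ℕ → FO S → FO S

def FO.freeVars : FO S → Finset ℕ
  | .atom a => a.vars
  | .neg φ => φ.freeVars
  | .and φ ψ => φ.freeVars ∪ ψ.freeVars
  | .ex x φ => φ.freeVars.erase x

def FO.syms : FO S → Set S.Rel
  | .atom a => a.syms
  | .neg φ => φ.syms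
  | .and φ ψ => φ.syms ∪ ψ.syms
  | .ex _ φ => φ.syms

def FO.Realize {D : Type} (A : Str S D) (v : ℕ → D) : FO S → Prop
  | .atom a => a.Realize A v
  | .neg φ => ¬ φ.Realize A v
  | .and φ ψ => φ.Realize A v ∧ ψ.Realize A v
  | .ex x φ => ∃ e : D, φ.Realize A (Function.update v x e)

/-- `A` is ω-saturated: every elementary type with finitely many parameters
`a : Fin n → D` (occupying the variables `m, …, m + n - 1`) and free variables among
`0, …, m - 1` which is finitely realized in `(A, a)` is realized in `(A, a)`. -/
def OmegaSaturated {D : Type} (A : Str S D) : Prop :=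
  ∀ (n m : ℕ) (a : Fin n → D) (T : Set (FO S)),
    (∀ φ ∈ T, φ.freeVars ⊆ Finset.range (m + n)) →
    (∀ T₀ : Finset (FO S), ↑T₀ ⊆ T →
      ∃ v : ℕ → D, (∀ i : Fin n, v (m + i.1) = a i) ∧ ∀ φ ∈ T₀, φ.Realize A v) →
    ∃ v : ℕ → D, (∀ i : Fin n, v (m + i.1) = a i) ∧ ∀ φ ∈ T, φ.Realize A v

/-! ### The amalgam construction -/

/-- `(a, b) ∈ Z`: some member of `Z` has domain `{a}` and maps `a` to `b`. -/
def PairInZ {D₁ D₂ : Type} (Z : Set (Set (D₁ × D₂))) (x : D₁ × D₂) : Prop :=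
  ∃ p ∈ Z, x ∈ p ∧ ∀ y ∈ p, y.1 = x.1

/-- `(ā, b̄) ∈ Z`: some member of `Z` has domain exactly `{a₁,…,aₖ}` and maps each
`aⱼ` to `bⱼ`. -/
def TupInZ {D₁ D₂ : Type} (Z : Set (Set (D₁ × D₂))) {k : ℕ} (t : Fin k → D₁ × D₂) : Prop :=
  ∃ p ∈ Z, (∀ j, t j ∈ p) ∧ ∀ y ∈ p, ∃ j, y.1 = (t j).1

def LeftGood {D₁ D₂ : Type} {k : ℕ} (t : Fin k → D₁ × D₂) : Prop :=
  ∀ i j, (t i).1 = (t j).1 → (t i).2 = (t j).2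

def RightGood {D₁ D₂ : Type} {k : ℕ} (t : Fin k → D₁ × D₂) : Prop :=
  ∀ i j, (t i).2 = (t j).2 → (t i).1 = (t j).1

/-- The domain of the amalgam: pairs `(a,b)` with `(a,b) ∈ Z`. -/
def AmDom {D₁ D₂ : Type} (Z : Set (Set (D₁ × D₂))) : Type := {x : D₁ × D₂ // PairInZ Z x}

/-- The amalgam structure built from a uniform guarded `(σ ∩ τ)`-bisimulation `Z`
between `A` and `B`. -/
def Amalgam (σ τ : Set S.Rel) {D₁ D₂ : Type} (A : Str S D₁) (B : Str S D₂)
    (Z : Set (Set (D₁ × D₂))) : Str S (AmDom Z) := fun R t =>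
  (R ∈ σ ∩ τ ∧ A R (fun j => (t j).1.1) ∧ TupInZ Z fun j => (t j).1) ∨
  (R ∈ σ \ τ ∧ A R (fun j => (t j).1.1) ∧
    (TupInZ Z (fun j => (t j).1) ∨
      (LeftGood (fun j => (t j).1) ∧
        ¬ Live (σ ∩ τ) A (Set.range fun j => (t j).1.1)))) ∨
  (R ∈ τ \ σ ∧ B R (fun j => (t j).1.2) ∧
    (TupInZ Z (fun j => (t j).1) ∨
      (RightGood (fun j => (t j).1) ∧
        ¬ Live (σ ∩ τ) B (Set.range fun j => (t j).1.2))))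

/-- `Z₁`: the projections `(ā ⊗ b̄) ↦ ā` for `σ`-live `(ā ⊗ b̄)` in the amalgam. -/
def Z1 (σ τ : Set S.Rel) {D₁ D₂ : Type} (A : Str S D₁) (B : Str S D₂)
    (Z : Set (Set (D₁ × D₂))) : Set (Set (AmDom Z × D₁)) :=
  {p | ∃ X : Set (AmDom Z), Live σ (Amalgam σ τ A B Z) X ∧
        p = (fun u : AmDom Z => (u, u.1.1)) '' X}

/-- `Z₂`: the projections `(ā ⊗ b̄) ↦ b̄` for `τ`-live `(ā ⊗ b̄)` in the amalgam. -/
def Z2 (σ τ : Set S.Rel) {D₁ D₂ : Type} (A : Str S D₁) (B : Str S D₂)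
    (Z : Set (Set (D₁ × D₂))) : Set (Set (AmDom Z × D₂)) :=
  {p | ∃ X : Set (AmDom Z), Live τ (Amalgam σ τ A B Z) X ∧
        p = (fun u : AmDom Z => (u, u.1.2)) '' X}

/-! ### Normal form for the uniform guarded fragment -/

def bigAnd : List (GFml S) → GFml S
  | [] => .atom (.eq 0 0)
  | [c] => c
  | c :: c' :: rest => .and c (bigAnd (c' :: rest))

/-- A conjunct `∃z λ(z)` (with atomic `λ` whose variable set is `{z}`),
rendered as `∃z (λ(z) ∧ λ(z))`. -/
def IsExConj (c : GFml S) : Prop :=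
  ∃ (z : ℕ) (a : Atom S), a.vars = {z} ∧ c = .exg [z] a (.atom a)

/-- An existential requirement `∀x̄(α(x̄) → ∃ȳ(β(x̄,ȳ) ∧ ψ(x̄,ȳ)))`, rendered as
`¬∃x̄(α ∧ ¬∃ȳ(β ∧ ψ))`. -/
def IsExReq (c : GFml S) : Prop :=
  ∃ (xs : List ℕ) (α : Atom S) (ys : List ℕ) (β : Atom S) (ψ : GFml S),
    xs ≠ [] ∧ ψ.QFree ∧ c = .neg (.exg xs α (.neg (.exg ys β ψ)))

/-- A universal requirement `∀x̄(κ(x̄) → (θ(x̄) → ∀ȳ(γ(x̄,ȳ) → ψ(x̄,ȳ))))`, rendered as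
`¬∃x̄(κ ∧ (θ ∧ ∃ȳ(γ ∧ ¬ψ)))`. -/
def IsUnivReq (c : GFml S) : Prop :=
  ∃ (xs : List ℕ) (κ : Atom S) (θ : GFml S) (ys : List ℕ) (γ : Atom S) (ψ : GFml S),
    xs ≠ [] ∧ θ.QFree ∧ ψ.QFree ∧
      c = .neg (.exg xs κ (.and θ (.exg ys γ (.neg ψ))))

/-- `φ` is in normal form, with list of conjuncts `L`. -/
def NormalFormWith (φ : GFml S) (L : List (GFml S)) : Prop :=
  φ = bigAnd L ∧ (∃ c ∈ L, IsExConj c) ∧ (∃ c ∈ L, IsExReq c) ∧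
    (∃ c ∈ L, IsUnivReq c) ∧ ∀ c ∈ L, IsExConj c ∨ IsExReq c ∨ IsUnivReq c

def InNormalForm (φ : GFml S) : Prop := ∃ L : List (GFml S), NormalFormWith φ L

/-- Expansions/reducts: `A` and `A'` agree on the symbols in `ρ`. -/
def AgreeOn (ρ : Set S.Rel) {D : Type} (A A' : Str S D) : Prop := ∀ R ∈ ρ, A R = A' R

/-! ### 1-types and satisfiability witnesses -/

/-- A 1-type over the signature: for each relation symbol, whether the (unique)
`{x}`-atom of that symbol is in the type. -/
def OneType (S : Sig) : Type := S.Rel → Prop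

/-- The 1-type realized by an element. -/
def tp {D : Type} (A : Str S D) (a : D) : OneType S := fun R => A R fun _ => a

/-- A 1-type contains the atomic formula `a(x)` (for `a` with a single variable). -/
def OneType.SatAtom (π : OneType S) : Atom S → Prop
  | .eq _ _ => True
  | .rel R _ => π R

/-- `(A, c)` is a `(P, π)`-witness for a normal-form sentence with conjuncts `L`. -/
def IsPWitness (L : List (GFml S)) {D : Type} (A : Str S D) (c : D)
    (P : Set (OneType S)) (π : OneType S) : Prop :=
  tp A c = π ∧
  (∀ a : D, tp A a ∈ P) ∧
  (∀ cj ∈ L, ∀ (xs : List ℕ) (α : Atom S) (ys : List ℕ) (β : Atom S) (ψ : GFml S),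
    cj = GFml.neg (.exg xs α (.neg (.exg ys β ψ))) →
    ∀ v : ℕ → D, (∃ x ∈ xs, v x = c) → α.Realize A v →
      ∃ w : ℕ → D, (∀ z, z ∉ ys → w z = v z) ∧ β.Realize A w ∧ ψ.Realize A w) ∧
  (∀ cj ∈ L, ∀ (xs : List ℕ) (κ : Atom S) (θ : GFml S) (ys : List ℕ) (γ : Atom S)
      (ψ : GFml S),
    cj = GFml.neg (.exg xs κ (.and θ (.exg ys γ (.neg ψ)))) →
    ∀ v : ℕ → D, (∃ x ∈ xs, v x = c) → κ.Realize A v → θ.Realize A v →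
      ∀ w : ℕ → D, (∀ z, z ∉ ys → w z = v z) → γ.Realize A w → ψ.Realize A w)

/-- `P` is a witness for a normal-form sentence with conjuncts `L`. -/
def IsWitnessSet (L : List (GFml S)) (P : Set (OneType S)) : Prop :=
  (∀ cj ∈ L, ∀ (z : ℕ) (a : Atom S), cj = GFml.exg [z] a (.atom a) →
    ∃ π ∈ P, π.SatAtom a) ∧
  (∀ π ∈ P, ∃ (D : Type) (_ : Nonempty D) (A : Str S D) (c : D), IsPWitness L A c P π)

end GFP
namespace GFP

/-- The concrete signature with a ternary `G`, a binary `R` and a unary `A`. -/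
inductive GRA : Type where
  | G | R | A

def SigGRA : Sig where
  Rel := GRA
  arity := fun r => match r with | .G => 3 | .R => 2 | .A => 1
  -- (the linter warning about `R` is irrelevant)
  arity_pos := by intro r; cases r <;> decide

/-- `G(x,y,z)` -/
def atG : Atom SigGRA := .rel GRA.G ![0, 1, 2]
/-- `R(x,y)`, `R(y,z)`, `R(z,x)` -/
def atRxy : Atom SigGRA := .rel GRA.R ![0, 1]
def atRyz : Atom SigGRA := .rel GRA.R ![1, 2]
def atRzx : Atom SigGRA := .rel GRA.R ![2, 0]
/-- `A(x)`, `A(y)` -/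
def atAx : Atom SigGRA := .rel GRA.A ![0]
def atAy : Atom SigGRA := .rel GRA.A ![1]

/-- `φ := ∃x∃y∃z (G(x,y,z) ∧ R(x,y) ∧ R(y,z) ∧ R(z,x))`. -/
def phiTriangle : GFml SigGRA :=
  .exg [0, 1, 2] atG (.and (.atom atRxy) (.and (.atom atRyz) (.atom atRzx)))

/-- `A(x) ↔ ¬A(y)`, written as `¬(¬(A(x) ∧ ¬A(y)) ∧ ¬(¬A(x) ∧ A(y)))`. -/
def iffAxAy : GFml SigGRA :=
  .neg (.and (.neg (.and (.atom atAx) (.neg (.atom atAy))))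
             (.neg (.and (.neg (.atom atAx)) (.atom atAy))))

/-- `ψ := ∀x∀y (R(x,y) → (A(x) ↔ ¬A(y)))`, written as `¬∃x∃y(R(x,y) ∧ ¬(A(x) ↔ ¬A(y)))`. -/
def psiTwoCol : GFml SigGRA := .neg (.exg [0, 1] atRxy (.neg iffAxAy))

end GFP

/-!
An odd cycle admits no proper 2-colouring, so `φ ⊨ ¬ψ`. Reduction modulo 3 maps the successor
relation on `ℤ` onto the directed triangle `ℤ/3`, bijectively on every guarded set (a point or
an edge `{n, n + 1}`). Hence the `{R}`-reducts of `(ℤ/3, G full, A empty)`, a model of `φ`, and of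
`(ℤ, G empty, A = even)`, a model of `ψ`, are guarded bisimilar and agree on all `GF[{R}]`
sentences, so an interpolant `χ` would hold in the first structure and fail in the second.
-/

theorem Int.eq_of_cast_eq_of_abs_sub_lt {n : ℕ} {a b : ℤ} (h : (a : ZMod n) = b)
    (hab : |a - b| < n) : a = b :=
  sub_eq_zero.mp <| Int.eq_zero_of_abs_lt_dvd
    ((ZMod.intCast_eq_intCast_iff_dvd_sub b a n).mp h.symm) hab

namespace GFP

section BackAndForth

variable {S : Sig} {D₁ D₂ : Type}

/-- A guarded bisimulation phrased on assignments: `I v w X` says that `v` and `w` correspond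
on the variables in `X`. -/
structure IsGuardedBackForth (σ : Set S.Rel) (A₁ : Str S D₁) (A₂ : Str S D₂)
    (I : (ℕ → D₁) → (ℕ → D₂) → Finset ℕ → Prop) : Prop where
  atom {v : ℕ → D₁} {w : ℕ → D₂} {X : Finset ℕ} {a : Atom S} :
    I v w X → a.syms ⊆ σ → a.vars ⊆ X → (a.Realize A₁ v ↔ a.Realize A₂ w)
  forth {v : ℕ → D₁} {w : ℕ → D₂} {X : Finset ℕ} {ys : List ℕ} {a : Atom S}
    {v' : ℕ → D₁} : I v w X → a.syms ⊆ σ →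
    (∀ x ∈ a.vars, x ∉ ys → x ∈ X) → (∀ x ∉ ys, v' x = v x) → a.Realize A₁ v' →
    ∃ w', (∀ x ∉ ys, w' x = w x) ∧ I v' w' a.vars
  back {v : ℕ → D₁} {w : ℕ → D₂} {X : Finset ℕ} {ys : List ℕ} {a : Atom S}
    {w' : ℕ → D₂} : I v w X → a.syms ⊆ σ →
    (∀ x ∈ a.vars, x ∉ ys → x ∈ X) → (∀ x ∉ ys, w' x = w x) → a.Realize A₂ w' →
    ∃ v', (∀ x ∉ ys, v' x = v x) ∧ I v' w' a.vars

theorem IsGuardedBackForth.realize_iff {σ : Set S.Rel} {A₁ : Str S D₁} {A₂ : Str S D₂}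
    {I : (ℕ → D₁) → (ℕ → D₂) → Finset ℕ → Prop} (hI : IsGuardedBackForth σ A₁ A₂ I)
    {χ : GFml S} (hχ : IsGF σ χ) {X : Finset ℕ} {v : ℕ → D₁} {w : ℕ → D₂}
    (hX : χ.freeVars ⊆ X) (hvw : I v w X) : χ.Realize A₁ v ↔ χ.Realize A₂ w := by
  obtain ⟨hwf, hsyms⟩ := hχ
  induction χ generalizing X v w with
  | atom a => exact hI.atom hvw hsyms hX
  | neg φ ih => exact not_congr (ih hX hvw hwf hsyms)
  | and φ ψ ihφ ihψ =>
    simp only [GFml.syms, Set.union_subset_iff] at hsyms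
    simp only [GFml.freeVars, Finset.union_subset_iff] at hX
    exact and_congr (ihφ hX.1 hvw hwf.1 hsyms.1) (ihψ hX.2 hvw hwf.2 hsyms.2)
  | exg ys a φ ih =>
    obtain ⟨hwfφ, hφa, -⟩ := hwf
    simp only [GFml.syms, Set.union_subset_iff] at hsyms
    have hguard : ∀ x ∈ a.vars, x ∉ ys → x ∈ X := fun x hx hxys =>
      hX (by simp [GFml.freeVars, hx, hxys])
    constructor
    · rintro ⟨v', hv', ha, hφ⟩
      obtain ⟨w', hw', hI'⟩ := hI.forth hvw hsyms.1 hguard hv' ha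
      exact ⟨w', hw', (hI.atom hI' hsyms.1 subset_rfl).mp ha,
        (ih hφa hI' hwfφ hsyms.2).mp hφ⟩
    · rintro ⟨w', hw', ha, hφ⟩
      obtain ⟨v', hv', hI'⟩ := hI.back hvw hsyms.1 hguard hw' ha
      exact ⟨v', hv', (hI.atom hI' hsyms.1 subset_rfl).mpr ha,
        (ih hφa hI' hwfφ hsyms.2).mpr hφ⟩

end BackAndForth

def triangleModel : Str SigGRA (ZMod 3) := fun r => match r with
  | .G => fun _ => True
  | .R => fun t : Fin 2 → ZMod 3 => t 1 = t 0 + 1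
  | .A => fun _ => False

def lineModel : Str SigGRA ℤ := fun r => match r with
  | .G => fun _ => False
  | .R => fun t : Fin 2 → ℤ => t 1 = t 0 + 1
  | .A => fun t : Fin 1 → ℤ => Even (t 0)

/-- `w` lifts `v` along `ℤ → ZMod 3` on `X` and stays inside one point or edge of `lineModel`. -/
def IsLocalLift (v : ℕ → ZMod 3) (w : ℕ → ℤ) (X : Finset ℕ) : Prop :=
  (∀ x ∈ X, (w x : ZMod 3) = v x) ∧ ∀ x ∈ X, ∀ y ∈ X, |w x - w y| ≤ 1

theorem Atom.exists_realize_iff_eq_add {a : Atom SigGRA} (ha : a.syms ⊆ ({GRA.R} : Set GRA)) :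
    ∃ p q : ℕ, ∃ k : ℤ, (k = 0 ∨ k = 1) ∧ a.vars = {p, q} ∧
      (∀ v, a.Realize triangleModel v ↔ v q = v p + k) ∧
      ∀ w, a.Realize lineModel w ↔ w q = w p + k := by
  cases a with
  | eq i j =>
    exact ⟨i, j, 0, .inl rfl, rfl, fun v => by simp [Atom.Realize, eq_comm],
      fun w => by simp [Atom.Realize, eq_comm]⟩
  | rel r ts =>
    cases r with
    | G => exact GRA.noConfusion (ha rfl : GRA.G = GRA.R)
    | A => exact GRA.noConfusion (ha rfl : GRA.A = GRA.R)
    | R =>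
      refine ⟨ts (0 : Fin 2), ts (1 : Fin 2), 1, .inr rfl, ?_, fun v => ?_, fun w => Iff.rfl⟩
      · ext x
        simp only [Atom.vars, Finset.mem_image, Finset.mem_univ, true_and,
          Finset.mem_insert, Finset.mem_singleton, eq_comm (a := x)]
        exact Fin.exists_fin_two
      · show v (ts (1 : Fin 2)) = v (ts (0 : Fin 2)) + 1 ↔ _
        push_cast
        rfl

namespace IsLocalLift

variable {v v' : ℕ → ZMod 3} {w w' : ℕ → ℤ} {X Y : Finset ℕ} {ys : List ℕ}

theorem eq_add_iff (hvw : IsLocalLift v w X) {p q : ℕ} (hp : p ∈ X) (hq : q ∈ X) {k : ℤ}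
    (hk : k = 0 ∨ k = 1) : v q = v p + k ↔ w q = w p + k := by
  constructor
  · intro h
    refine Int.eq_of_cast_eq_of_abs_sub_lt (n := 3) ?_ ?_
    · push_cast
      rw [hvw.1 q hq, hvw.1 p hp, h]
    · have := hvw.2 q hq p hp
      rw [abs_le] at this
      rw [abs_lt]
      omega
  · intro h
    rw [← hvw.1 q hq, ← hvw.1 p hp, h]
    push_cast
    rfl

theorem exists_extend (hvw : IsLocalLift v w X) (hY : ∀ x ∈ Y, x ∉ ys → x ∈ X)
    (hv' : ∀ x ∉ ys, v' x = v x) {u : ℕ → ℤ} (hu : IsLocalLift v' u Y) :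
    ∃ w', (∀ x ∉ ys, w' x = w x) ∧ IsLocalLift v' w' Y := by
  -- translate `u` by a multiple of 3 so that it agrees with `w` on the variables kept from `X`
  obtain ⟨k, hk3, hk⟩ : ∃ k : ℤ, (k : ZMod 3) = 0 ∧ ∀ x ∈ Y, x ∉ ys → u x + k = w x := by
    by_cases h : ∃ z ∈ Y, z ∉ ys
    · obtain ⟨z, hzY, hz⟩ := h
      refine ⟨w z - u z, ?_, fun x hxY hx => ?_⟩
      · push_cast
        rw [hvw.1 z (hY z hzY hz), hu.1 z hzY, hv' z hz, sub_self]
      refine Int.eq_of_cast_eq_of_abs_sub_lt (n := 3) ?_ ?_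
      · push_cast
        rw [hu.1 x hxY, hvw.1 x (hY x hxY hx), hvw.1 z (hY z hzY hz), hu.1 z hzY, hv' x hx,
          hv' z hz]
        ring
      · have h₁ := hu.2 x hxY z hzY
        have h₂ := hvw.2 z (hY z hzY hz) x (hY x hxY hx)
        rw [abs_le] at h₁ h₂
        rw [abs_lt]
        omega
    · push Not at h
      exact ⟨0, Int.cast_zero, fun x hxY hx => absurd (h x hxY) hx⟩
  have hw' : ∀ x ∈ Y, (if x ∈ ys then u x + k else w x) = u x + k := fun x hx => by
    split_ifs with h
    · rfl
    · exact (hk x hx h).symm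
  refine ⟨fun x => if x ∈ ys then u x + k else w x, fun x hx => if_neg hx,
    fun x hx => ?_, fun x hx y hy => ?_⟩ <;> dsimp only
  · rw [hw' x hx]
    push_cast
    rw [hk3, add_zero, hu.1 x hx]
  · rw [hw' x hx, hw' y hy, add_sub_add_right_eq_sub]
    exact hu.2 x hx y hy

theorem exists_project (hvw : IsLocalLift v w X) (hY : ∀ x ∈ Y, x ∉ ys → x ∈ X)
    (hw' : ∀ x ∉ ys, w' x = w x) (hdiam : ∀ x ∈ Y, ∀ y ∈ Y, |w' x - w' y| ≤ 1) :
    ∃ v', (∀ x ∉ ys, v' x = v x) ∧ IsLocalLift v' w' Y := by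
  refine ⟨fun x => if x ∈ ys then (w' x : ZMod 3) else v x, fun x hx => if_neg hx,
    fun x hx => ?_, hdiam⟩
  dsimp only
  split_ifs with h
  · rfl
  · rw [hw' x h, hvw.1 x (hY x hx h)]

end IsLocalLift

theorem exists_isLocalLift_pair {v : ℕ → ZMod 3} {p q : ℕ} {k : ℤ} (hk : k = 0 ∨ k = 1)
    (h : v q = v p + k) : ∃ u, IsLocalLift v u {p, q} := by
  refine ⟨fun x => (v p).val + if x = q then k else 0, fun x hx => ?_, fun x _ y _ => ?_⟩ <;>
    dsimp only
  · simp only [Finset.mem_insert, Finset.mem_singleton] at hx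
    rcases hx with rfl | rfl
    · split_ifs with hpq
      · push_cast
        rw [ZMod.natCast_zmod_val, ← h, hpq]
      · simp
    · simp [h]
  · split_ifs <;> rcases hk with rfl | rfl <;> simp

theorem abs_sub_le_one_of_eq_add {w : ℕ → ℤ} {p q : ℕ} {k : ℤ} (hk : k = 0 ∨ k = 1)
    (h : w q = w p + k) : ∀ x ∈ ({p, q} : Finset ℕ), ∀ y ∈ ({p, q} : Finset ℕ),
      |w x - w y| ≤ 1 := by
  simp only [Finset.mem_insert, Finset.mem_singleton]
  rintro x (rfl | rfl) y (rfl | rfl) <;> rw [abs_le] <;> omega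

theorem isGuardedBackForth_isLocalLift :
    IsGuardedBackForth ({GRA.R} : Set GRA) triangleModel lineModel IsLocalLift where
  atom {v w X a} hvw ha hX := by
    obtain ⟨p, q, k, hk, hpq, h₁, h₂⟩ := Atom.exists_realize_iff_eq_add ha
    rw [hpq, Finset.insert_subset_iff, Finset.singleton_subset_iff] at hX
    rw [h₁, h₂]
    exact hvw.eq_add_iff hX.1 hX.2 hk
  forth {v w X ys a v'} hvw ha hX hv' hav' := by
    obtain ⟨p, q, k, hk, hpq, h₁, -⟩ := Atom.exists_realize_iff_eq_add ha
    rw [hpq] at hX ⊢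
    obtain ⟨u, hu⟩ := exists_isLocalLift_pair hk ((h₁ v').mp hav')
    exact hvw.exists_extend hX hv' hu
  back {v w X ys a w'} hvw ha hX hw' haw' := by
    obtain ⟨p, q, k, hk, hpq, -, h₂⟩ := Atom.exists_realize_iff_eq_add ha
    rw [hpq] at hX ⊢
    exact hvw.exists_project hX hw' (abs_sub_le_one_of_eq_add hk ((h₂ w').mp haw'))

theorem realize_triangleModel_iff_lineModel {χ : GFml SigGRA}
    (hχ : IsGF ({GRA.R} : Set GRA) χ) (hs : χ.Sentence) (v : ℕ → ZMod 3) (w : ℕ → ℤ) :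
    χ.Realize triangleModel v ↔ χ.Realize lineModel w :=
  isGuardedBackForth_isLocalLift.realize_iff hχ hs.subset
    ⟨fun _ h => absurd h (Finset.notMem_empty _), fun _ h => absurd h (Finset.notMem_empty _)⟩

section Realize

variable {D : Type} (M : Str SigGRA D) (v : ℕ → D)

theorem realize_rel_G (i j l : ℕ) :
    (Atom.rel GRA.G ![i, j, l]).Realize M v ↔ M GRA.G ![v i, v j, v l] :=
  Iff.of_eq (congrArg (M GRA.G) (funext fun k : Fin 3 => by fin_cases k <;> rfl))

theorem realize_rel_R (i j : ℕ) :
    (Atom.rel GRA.R ![i, j]).Realize M v ↔ M GRA.R ![v i, v j] :=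
  Iff.of_eq (congrArg (M GRA.R) (funext fun k : Fin 2 => by fin_cases k <;> rfl))

theorem realize_rel_A (i : ℕ) :
    (Atom.rel GRA.A ![i]).Realize M v ↔ M GRA.A ![v i] :=
  Iff.of_eq (congrArg (M GRA.A) (funext fun k : Fin 1 => by fin_cases k; rfl))

theorem realize_phiTriangle_iff : phiTriangle.Realize M v ↔
    ∃ a b c, M GRA.G ![a, b, c] ∧ M GRA.R ![a, b] ∧ M GRA.R ![b, c] ∧ M GRA.R ![c, a] := by
  constructor
  · rintro ⟨u, -, hG, hab, hbc, hca⟩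
    exact ⟨u 0, u 1, u 2, (realize_rel_G M u 0 1 2).mp hG, (realize_rel_R M u 0 1).mp hab,
      (realize_rel_R M u 1 2).mp hbc, (realize_rel_R M u 2 0).mp hca⟩
  · rintro ⟨a, b, c, hG, hab, hbc, hca⟩
    let u : ℕ → D := fun x => if h : x < 3 then ![a, b, c] ⟨x, h⟩ else v x
    refine ⟨u, fun x hx => dif_neg ?_, (realize_rel_G M u 0 1 2).mpr hG,
      (realize_rel_R M u 0 1).mpr hab, (realize_rel_R M u 1 2).mpr hbc,
      (realize_rel_R M u 2 0).mpr hca⟩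
    simp only [List.mem_cons, List.not_mem_nil, or_false] at hx
    omega

theorem realize_iffAxAy_iff : iffAxAy.Realize M v ↔ (M GRA.A ![v 0] ↔ ¬ M GRA.A ![v 1]) := by
  have h₀ := realize_rel_A M v 0
  have h₁ := realize_rel_A M v 1
  simp only [iffAxAy, GFml.Realize, atAx, atAy, h₀, h₁]
  tauto

theorem realize_psiTwoCol_iff : psiTwoCol.Realize M v ↔
    ∀ c d, M GRA.R ![c, d] → (M GRA.A ![c] ↔ ¬ M GRA.A ![d]) := by
  constructor
  · intro hψ c d hcd
    by_contra hne
    let u : ℕ → D := fun x => if h : x < 2 then ![c, d] ⟨x, h⟩ else v x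
    refine hψ ⟨u, fun x hx => dif_neg ?_, (realize_rel_R M u 0 1).mpr hcd,
      fun h => hne ((realize_iffAxAy_iff M u).mp h)⟩
    simp only [List.mem_cons, List.not_mem_nil, or_false] at hx
    omega
  · rintro h ⟨u, -, hR, hne⟩
    exact hne ((realize_iffAxAy_iff M u).mpr (h _ _ ((realize_rel_R M u 0 1).mp hR)))

end Realize

theorem entails_phiTriangle_neg_psiTwoCol : Entails phiTriangle (.neg psiTwoCol) := by
  intro D _ M v hφ hψ
  obtain ⟨a, b, c, -, hab, hbc, hca⟩ := (realize_phiTriangle_iff M v).mp hφ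
  have hcol := (realize_psiTwoCol_iff M v).mp hψ
  have := hcol a b hab
  have := hcol b c hbc
  have := hcol c a hca
  tauto

theorem realize_phiTriangle_triangleModel (v : ℕ → ZMod 3) :
    phiTriangle.Realize triangleModel v :=
  (realize_phiTriangle_iff _ v).mpr ⟨0, 1, 2, trivial, rfl, rfl, rfl⟩

theorem realize_psiTwoCol_lineModel (w : ℕ → ℤ) : psiTwoCol.Realize lineModel w := by
  refine (realize_psiTwoCol_iff _ w).mpr fun c d (hcd : d = c + 1) => ?_
  show Even c ↔ ¬ Even d
  rw [hcd, Int.even_add_one, not_not]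

end GFP

open GFP in
/-- `φ ⊨ ¬ψ` (both are one-dimensional GF sentences), but there is
no one-dimensional GF sentence `χ` over the shared vocabulary `{R}` with `φ ⊨ χ` and
`χ ⊨ ¬ψ`. -/
theorem no_oneDim_interpolant_for_triangle :
    Entails phiTriangle (.neg psiTwoCol) ∧
    IsGF Set.univ phiTriangle ∧ phiTriangle.OneDim ∧ phiTriangle.Sentence ∧
    IsGF Set.univ (GFml.neg psiTwoCol) ∧ (GFml.neg psiTwoCol).OneDim ∧
      (GFml.neg psiTwoCol).Sentence ∧
    ¬ ∃ χ : GFml SigGRA, IsGF ({GRA.R} : Set GRA) χ ∧ χ.OneDim ∧ χ.Sentence ∧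
        Entails phiTriangle χ ∧ Entails χ (.neg psiTwoCol) := by
  refine ⟨entails_phiTriangle_neg_psiTwoCol,
    ⟨by simp only [phiTriangle, GFml.WF]; decide, Set.subset_univ _⟩,
    by simp only [phiTriangle, GFml.OneDim]; decide,
    by unfold GFml.Sentence; decide,
    ⟨by simp only [psiTwoCol, iffAxAy, GFml.WF]; decide, Set.subset_univ _⟩,
    by simp only [psiTwoCol, iffAxAy, GFml.OneDim]; decide,
    by unfold GFml.Sentence; decide, ?_⟩
  rintro ⟨χ, hχ, -, hs, hφχ, hχψ⟩
  have hχ₁ : χ.Realize triangleModel 0 := hφχ _ ⟨0⟩ _ _ (realize_phiTriangle_triangleModel 0)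
  have hχ₂ : χ.Realize lineModel 0 := (realize_triangleModel_iff_lineModel hχ hs 0 0).mp hχ₁
  exact hχψ _ ⟨0⟩ _ _ hχ₂ (realize_psiTwoCol_lineModel 0)
end

section
/- Let σ and τ be relational vocabularies, φ ∈ GUF1[σ] and ψ ∈ GUF1[τ] sentences. Suppose there is no sentence χ ∈ GUF1[σ ∩ τ] such that φ ⊨ χ and χ ⊨ ψ. Then there exist a σ-structure A and a τ-structure B such that A ⊨ φ, B ⊭ ψ, and A ≡_{σ∩τ} B, i.e., A and B satisfy exactly the same sentences of GUF1[σ ∩ τ]. -/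
set_option autoImplicit false

/-! Take `Γ`, the `GUF1[σ ∩ τ]` consequences of `φ`. By compactness `Γ ∪ {¬ψ}` has a model
`B`: otherwise a finite conjunction of members of `Γ` would be an interpolant. Again by
compactness, `φ` together with the `GUF1[σ ∩ τ]` theory of `B` has a model `A`: otherwise the
negation of a finite conjunction of sentences true in `B` would lie in `Γ`, hence be true in `B`.
Since that theory is complete, `A` and `B` agree on all `GUF1[σ ∩ τ]` sentences. -/

namespace GFP
open FirstOrder Language

variable {S : Sig}

def lang (S : Sig) : Language :=
  ⟨fun _ => Empty, fun n => {R : S.Rel // S.arity R = n}⟩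

def Str.ofStructure (M : Type) [(lang S).Structure M] : Str S M :=
  fun R t => Structure.RelMap (L := lang S) (⟨R, rfl⟩ : {R' : S.Rel // S.arity R' = S.arity R}) t

abbrev Str.toStructure {D : Type} (A : Str S D) : (lang S).Structure D where
  funMap f _ := f.elim
  RelMap R t := A R.1 fun i => t (Fin.cast R.2 i)

noncomputable def Atom.toFormula : Atom S → (lang S).Formula ℕ
  | .eq i j => Term.equal (Term.var i) (Term.var j)
  | .rel R ts => Relations.formula (⟨R, rfl⟩ : {R' : S.Rel // S.arity R' = S.arity R})
      fun k => Term.var (ts k)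

/-- Sends the variables of `ys` to the bound variables of the block `∃ ys`. -/
def quantVar (ys : List ℕ) (x : ℕ) : ℕ ⊕ Fin ys.length :=
  if h : x ∈ ys then .inr ⟨ys.idxOf x, List.idxOf_lt_length_iff.2 h⟩ else .inl x

noncomputable def GFml.toFormula : GFml S → (lang S).Formula ℕ
  | .atom a => a.toFormula
  | .neg φ => φ.toFormula.not
  | .and φ ψ => φ.toFormula ⊓ ψ.toFormula
  | .exg ys a φ => Formula.iExs (Fin ys.length) ((a.toFormula ⊓ φ.toFormula).relabel (quantVar ys))

section Realize

variable {M : Type} [(lang S).Structure M]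

theorem Atom.realize_toFormula (v : ℕ → M) (a : Atom S) :
    a.toFormula.Realize v ↔ a.Realize (Str.ofStructure M) v := by
  cases a with
  | eq i j => simp [Atom.toFormula, Atom.Realize]
  | rel R ts => exact Formula.realize_rel

theorem sumElim_comp_quantVar (ys : List ℕ) {v w : ℕ → M} (hw : ∀ x, x ∉ ys → w x = v x) :
    (fun x => Sum.elim v (fun j => w (ys.get j)) (quantVar ys x)) = w := by
  funext x
  by_cases hx : x ∈ ys
  · simp only [quantVar, dif_pos hx, Sum.elim_inr]
    exact congrArg w (List.idxOf_get _)
  · simp only [quantVar, dif_neg hx, Sum.elim_inl]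
    exact (hw x hx).symm

theorem GFml.realize_toFormula (φ : GFml S) (v : ℕ → M) :
    φ.toFormula.Realize v ↔ φ.Realize (Str.ofStructure M) v := by
  induction φ generalizing v with
  | atom a => exact a.realize_toFormula v
  | neg φ ih => exact not_congr (ih v)
  | and φ ψ ih₁ ih₂ => exact Formula.realize_inf.trans (and_congr (ih₁ v) (ih₂ v))
  | exg ys a φ ih =>
      simp only [GFml.toFormula, Formula.realize_iExs, Formula.realize_relabel,
        Formula.realize_inf, Function.comp_def, GFml.Realize]
      constructor
      · rintro ⟨i, ha, hφ⟩
        exact ⟨_, fun x hx => by simp [quantVar, hx], (a.realize_toFormula _).1 ha, (ih _).1 hφ⟩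
      · rintro ⟨w, hw, ha, hφ⟩
        refine ⟨fun j => w (ys.get j), ?_⟩
        rw [sumElim_comp_quantVar ys hw]
        exact ⟨(a.realize_toFormula w).2 ha, (ih w).2 hφ⟩

end Realize

/-- The free variables of `χ` become constants. -/
noncomputable def GFml.toSentence (χ : GFml S) : ((lang S)[[ℕ]]).Sentence :=
  Formula.equivSentence χ.toFormula

def IsRealizable (Γ : Set (GFml S)) : Prop :=
  ∃ (D : Type) (_ : Nonempty D) (A : Str S D) (v : ℕ → D), ∀ χ ∈ Γ, χ.Realize A v

theorem isRealizable_iff_isSatisfiable (Γ : Set (GFml S)) :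
    IsRealizable Γ ↔ Theory.IsSatisfiable (GFml.toSentence '' Γ) := by
  constructor
  · rintro ⟨D, _, A, v, hΓ⟩
    let := A.toStructure
    let := constantsOn.structure v
    have : D ⊨ GFml.toSentence '' Γ := by
      rw [Theory.model_iff]
      rintro _ ⟨χ, hχ, rfl⟩
      rw [GFml.toSentence, Formula.realize_equivSentence, GFml.realize_toFormula]
      exact hΓ χ hχ
    exact Theory.Model.isSatisfiable D
  · rintro ⟨M⟩
    let : (lang S).Structure M := (lang S).lhomWithConstants ℕ |>.reduct M
    refine ⟨M, inferInstance, Str.ofStructure M, fun n => ((lang S).con n : M), fun χ hχ => ?_⟩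
    have := M.is_model.realize_of_mem (φ := χ.toSentence) (Set.mem_image_of_mem _ hχ)
    rwa [GFml.toSentence, Formula.realize_equivSentence, GFml.realize_toFormula] at this

theorem isRealizable_of_forall_finset {Γ : Set (GFml S)}
    (h : ∀ Γ₀ : Finset (GFml S), ↑Γ₀ ⊆ Γ → IsRealizable (Γ₀ : Set (GFml S))) :
    IsRealizable Γ := by
  classical
  rw [isRealizable_iff_isSatisfiable, Theory.isSatisfiable_iff_isFinitelySatisfiable]
  intro T₀ hT₀
  obtain ⟨Γ₀, hΓ₀, rfl⟩ := Finset.subset_set_image_iff.1 hT₀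
  rw [Finset.coe_image, ← isRealizable_iff_isSatisfiable]
  exact h Γ₀ hΓ₀

theorem Atom.realize_congr {D : Type} (A : Str S D) {v w : ℕ → D} (a : Atom S)
    (h : ∀ x ∈ a.vars, v x = w x) : a.Realize A v ↔ a.Realize A w := by
  cases a with
  | eq i j => simp only [Atom.Realize, h i (by simp [Atom.vars]), h j (by simp [Atom.vars])]
  | rel R ts =>
      simp only [Atom.Realize, funext fun k => h (ts k) (by simp [Atom.vars])]

theorem GFml.realize_congr {D : Type} (A : Str S D) (φ : GFml S) :
    ∀ {v w : ℕ → D}, (∀ x ∈ φ.freeVars, v x = w x) → (φ.Realize A v ↔ φ.Realize A w) := by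
  induction φ with
  | atom a => exact fun h => a.realize_congr A h
  | neg φ ih => exact fun h => not_congr (ih h)
  | and φ ψ ih₁ ih₂ =>
      exact fun h => and_congr (ih₁ fun x hx => h x (Finset.mem_union_left _ hx))
        (ih₂ fun x hx => h x (Finset.mem_union_right _ hx))
  | exg ys a φ ih =>
      suffices ∀ {v w : ℕ → D}, (∀ x ∈ (exg ys a φ).freeVars, v x = w x) →
          (exg ys a φ).Realize A v → (exg ys a φ).Realize A w from
        fun {_ _} h => ⟨this h, this fun x hx => (h x hx).symm⟩
      classical
      rintro v w h ⟨u, hu, ha, hφ⟩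
      -- change the witness `u` outside the quantified block `ys` to agree with `w`
      have hu' : ∀ x ∈ a.vars ∪ φ.freeVars, u x = if x ∈ ys then u x else w x := by
        intro x hx
        split_ifs with hxy
        · rfl
        · exact (hu x hxy).trans (h x (Finset.mem_sdiff.2 ⟨hx, by simpa using hxy⟩))
      exact ⟨_, fun x hx => if_neg hx,
        (a.realize_congr A fun x hx => hu' x (Finset.mem_union_left _ hx)).1 ha,
        (ih fun x hx => hu' x (Finset.mem_union_right _ hx)).1 hφ⟩

theorem sat_iff_realize {D : Type} {A : Str S D} {χ : GFml S} (hχ : χ.Sentence) (v : ℕ → D) :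
    Sat A χ ↔ χ.Realize A v :=
  ⟨fun h => h v, fun h _ =>
    (χ.realize_congr A fun x hx => (Finset.eq_empty_iff_forall_notMem.1 hχ x hx).elim).1 h⟩

theorem mem_subf_self (φ : GFml S) : φ ∈ φ.subf := by
  cases φ <;> simp [GFml.subf]

def GFml.top : GFml S := .exg [0] (.eq 0 0) (.atom (.eq 0 0))

theorem GFml.realize_top {D : Type} (A : Str S D) (v : ℕ → D) : (GFml.top : GFml S).Realize A v :=
  ⟨v, fun _ _ => rfl, rfl, rfl⟩

theorem GFml.sentence_top : (GFml.top : GFml S).Sentence := by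
  simp [GFml.Sentence, GFml.top, GFml.freeVars, Atom.vars]

theorem isGUF1_top (ρ : Set S.Rel) : IsGUF1 ρ (GFml.top : GFml S) := by
  have hfv : (GFml.atom (.eq 0 0) : GFml S).freeVars = {0} := by simp [GFml.freeVars, Atom.vars]
  have hrel : BoolComb (RelAtom {0}) (GFml.atom (.eq 0 0) : GFml S) :=
    .base (.inr (.inl ⟨0, Finset.mem_singleton_self 0, hfv⟩))
  refine ⟨⟨⟨trivial, by simp [hfv, Atom.vars], by simp [Atom.vars]⟩,
    by simp [GFml.top, GFml.syms, Atom.syms]⟩, ⟨trivial, by simp [GFml.freeVars, Atom.vars]⟩, ?_⟩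
  simp only [GFml.Uniform, GFml.top, GFml.subf, List.mem_cons, List.not_mem_nil, or_false]
  rintro ψ (rfl | rfl | rfl | rfl)
  · exact .base (.inl GFml.sentence_top)
  · rw [GFml.freeVars, hfv, Finset.union_self]
    exact .and hrel hrel
  all_goals rw [hfv]; exact hrel

theorem IsGUF1.neg {ρ : Set S.Rel} {χ : GFml S} (h : IsGUF1 ρ χ) : IsGUF1 ρ (.neg χ) := by
  obtain ⟨hgf, hod, hun⟩ := h
  refine ⟨hgf, hod, fun ψ hψ => ?_⟩
  rcases List.mem_cons.1 hψ with rfl | hψ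
  · exact .neg (hun χ (mem_subf_self χ))
  · exact hun ψ hψ

theorem IsGUF1.and {ρ : Set S.Rel} {χ₁ χ₂ : GFml S} (h₁ : IsGUF1 ρ χ₁) (h₂ : IsGUF1 ρ χ₂)
    (s₁ : χ₁.Sentence) (s₂ : χ₂.Sentence) : IsGUF1 ρ (.and χ₁ χ₂) := by
  obtain ⟨⟨hwf₁, hsy₁⟩, hod₁, hun₁⟩ := h₁
  obtain ⟨⟨hwf₂, hsy₂⟩, hod₂, hun₂⟩ := h₂
  refine ⟨⟨⟨hwf₁, hwf₂⟩, Set.union_subset hsy₁ hsy₂⟩, ⟨hod₁, hod₂⟩, fun ψ hψ => ?_⟩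
  simp only [GFml.subf, List.mem_cons, List.mem_append] at hψ
  rcases hψ with rfl | hψ | hψ
  · have b₁ := hun₁ χ₁ (mem_subf_self χ₁)
    have b₂ := hun₂ χ₂ (mem_subf_self χ₂)
    rw [GFml.Sentence] at s₁ s₂
    rw [GFml.freeVars, s₁, s₂, Finset.union_empty]
    exact .and (s₁ ▸ b₁) (s₂ ▸ b₂)
  · exact hun₁ ψ hψ
  · exact hun₂ ψ hψ

theorem GFml.Sentence.and {χ₁ χ₂ : GFml S} (s₁ : χ₁.Sentence) (s₂ : χ₂.Sentence) :
    (GFml.and χ₁ χ₂).Sentence := by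
  rw [GFml.Sentence, GFml.freeVars, s₁, s₂, Finset.union_empty]

theorem exists_isGUF1_realize_iff_forall_mem (ρ : Set S.Rel) (Γ₀ : Finset (GFml S))
    (h : ∀ χ ∈ Γ₀, IsGUF1 ρ χ ∧ χ.Sentence) :
    ∃ χ, IsGUF1 ρ χ ∧ χ.Sentence ∧
      ∀ {D : Type} (A : Str S D) (v : ℕ → D), χ.Realize A v ↔ ∀ δ ∈ Γ₀, δ.Realize A v := by
  classical
  induction Γ₀ using Finset.induction_on with
  | empty => exact ⟨.top, isGUF1_top ρ, GFml.sentence_top, fun A v => by simp [GFml.realize_top]⟩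
  | insert θ Γ₀ _ ih =>
      obtain ⟨χ, hχ, hχs, hχr⟩ := ih fun δ hδ => h δ (Finset.mem_insert_of_mem hδ)
      obtain ⟨hθ, hθs⟩ := h θ (Finset.mem_insert_self θ Γ₀)
      exact ⟨.and θ χ, hθ.and hχ hθs hχs, hθs.and hχs, fun A v => by simp [GFml.Realize, hχr]⟩

theorem exists_isGUF1_entails_neg_of_not_isRealizable_insert {ρ : Set S.Rel} {θ : GFml S}
    {Δ : Set (GFml S)} (hΔ : ∀ δ ∈ Δ, IsGUF1 ρ δ ∧ δ.Sentence) (h : ¬ IsRealizable (insert θ Δ)) :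
    ∃ χ, IsGUF1 ρ χ ∧ χ.Sentence ∧ Entails θ (.neg χ) ∧
      ∀ {D : Type} (A : Str S D) (v : ℕ → D), (∀ δ ∈ Δ, δ.Realize A v) → χ.Realize A v := by
  classical
  obtain ⟨Γ₀, hΓ₀Δ, hΓ₀⟩ :
      ∃ Γ₀ : Finset (GFml S), ↑Γ₀ ⊆ insert θ Δ ∧ ¬ IsRealizable (Γ₀ : Set (GFml S)) := by
    by_contra! hfin
    exact h (isRealizable_of_forall_finset hfin)
  have hmem : ∀ δ ∈ Γ₀.erase θ, δ ∈ Δ := fun δ hδ =>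
    (hΓ₀Δ (Finset.mem_of_mem_erase hδ)).resolve_left (Finset.ne_of_mem_erase hδ)
  obtain ⟨χ, hχ, hχs, hχr⟩ :=
    exists_isGUF1_realize_iff_forall_mem ρ (Γ₀.erase θ) fun δ hδ => hΔ δ (hmem δ hδ)
  refine ⟨χ, hχ, hχs, fun D hD A v hθ hχv => hΓ₀ ⟨D, hD, A, v, fun δ hδ => ?_⟩,
    fun A v hΔv => (hχr A v).2 fun δ hδ => hΔv δ (hmem δ hδ)⟩
  by_cases hδθ : δ = θ
  · exact hδθ ▸ hθ
  · exact (hχr A v).1 hχv δ (Finset.mem_erase.2 ⟨hδθ, hδ⟩)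

end GFP

open GFP in
theorem no_interpolant_gives_equivalent_models_general (S : Sig) (σ τ : Set S.Rel)
    (φ ψ : GFml S) (hφs : φ.Sentence)
    (h : ¬ ∃ χ : GFml S, IsGUF1 (σ ∩ τ) χ ∧ χ.Sentence ∧ Entails φ χ ∧ Entails χ ψ) :
    ∃ (D₁ : Type) (_ : Nonempty D₁) (A : Str S D₁)
      (D₂ : Type) (_ : Nonempty D₂) (B : Str S D₂),
      Sat A φ ∧ ¬ Sat B ψ ∧
      ∀ χ : GFml S, IsGUF1 (σ ∩ τ) χ → χ.Sentence → (Sat A χ ↔ Sat B χ) := by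
  obtain ⟨D₂, hD₂, B, vB, hB⟩ :
      IsRealizable (insert (.neg ψ) {χ | IsGUF1 (σ ∩ τ) χ ∧ χ.Sentence ∧ Entails φ χ}) := by
    by_contra hB
    obtain ⟨χ, hχ, hχs, hψχ, hΓχ⟩ :=
      exists_isGUF1_entails_neg_of_not_isRealizable_insert (fun δ hδ => ⟨hδ.1, hδ.2.1⟩) hB
    exact h ⟨χ, hχ, hχs, fun D hD A v hφv => hΓχ A v fun δ hδ => hδ.2.2 D hD A v hφv,
      fun D hD A v hχv => not_not.1 fun hψv => hψχ D hD A v hψv hχv⟩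
  obtain ⟨D₁, hD₁, A, vA, hA⟩ :
      IsRealizable (insert φ {χ | IsGUF1 (σ ∩ τ) χ ∧ χ.Sentence ∧ χ.Realize B vB}) := by
    by_contra hA
    obtain ⟨χ, hχ, hχs, hφχ, hBχ⟩ :=
      exists_isGUF1_entails_neg_of_not_isRealizable_insert (fun δ hδ => ⟨hδ.1, hδ.2.1⟩) hA
    exact hB (.neg χ) (.inr ⟨hχ.neg, hχs, hφχ⟩) (hBχ B vB fun δ hδ => hδ.2.2)
  refine ⟨D₁, hD₁, A, D₂, hD₂, B, (sat_iff_realize hφs vA).2 (hA φ (.inl rfl)),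
    fun hψ => hB (.neg ψ) (.inl rfl) (hψ vB), fun χ hχ hχs => ?_⟩
  rw [sat_iff_realize hχs vA, sat_iff_realize hχs vB]
  by_cases hb : χ.Realize B vB
  · exact iff_of_true (hA χ (.inr ⟨hχ, hχs, hb⟩)) hb
  · exact iff_of_false (hA (.neg χ) (.inr ⟨hχ.neg, hχs, hb⟩)) hb

open GFP in
/-- If there is no `GUF1[σ ∩ τ]` interpolant between the sentences
`φ ∈ GUF1[σ]` and `ψ ∈ GUF1[τ]`, then there are a `σ`-structure `A` and a
`τ`-structure `B` with `A ⊨ φ`, `B ⊭ ψ` which satisfy the same `GUF1[σ ∩ τ]`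
sentences. -/
theorem no_interpolant_gives_equivalent_models (S : Sig) (σ τ : Set S.Rel)
    (φ ψ : GFml S) (hφ : IsGUF1 σ φ) (hφs : φ.Sentence)
    (hψ : IsGUF1 τ ψ) (hψs : ψ.Sentence)
    (h : ¬ ∃ χ : GFml S, IsGUF1 (σ ∩ τ) χ ∧ χ.Sentence ∧ Entails φ χ ∧ Entails χ ψ) :
    ∃ (D₁ : Type) (_ : Nonempty D₁) (A : Str S D₁)
      (D₂ : Type) (_ : Nonempty D₂) (B : Str S D₂),
      Sat A φ ∧ ¬ Sat B ψ ∧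
      ∀ χ : GFml S, IsGUF1 (σ ∩ τ) χ → χ.Sentence → (Sat A χ ↔ Sat B χ) :=
  no_interpolant_gives_equivalent_models_general S σ τ φ ψ hφs h
end

section
/- Let A be a σ-structure, B a τ-structure, and Z a uniform guarded (σ∩τ)-bisimulation between A and B. Define the amalgam U with domain U = {(a,b) ∈ A×B : (a,b) ∈ Z} and interpretations: for R ∈ σ∩τ, (ā ⊗ b̄) ∈ R^U iff ā ∈ R^A and (ā, b̄) ∈ Z; for R ∈ σ∖τ, (ā ⊗ b̄) ∈ R^U iff ā ∈ R^A and either (ā, b̄) ∈ Z, or (ā ⊗ b̄) is left-good and the set ā is not (σ∩τ)-live in A; for R ∈ τ∖σ, (ā ⊗ b̄) ∈ R^U iff b̄ ∈ R^B and either (ā, b̄) ∈ Z, or (ā ⊗ b̄) is right-good and the set b̄ is not (σ∩τ)-live in B. Let Z₁ := {(ā ⊗ b̄) ↦ ā : (ā ⊗ b̄) is σ-live in U} and Z₂ := {(ā ⊗ b̄) ↦ b̄ : (ā ⊗ b̄) is τ-live in U}. Then Z₁ consists of uniform partial σ-isomorphisms between U and A, and Z₂ consists of uniform partial τ-isomorphisms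 between U and B. -/
set_option autoImplicit false

section Aux
open GFP
variable {S : Sig} {σ τ : Set S.Rel} {D₁ D₂ : Type}
  {A : Str S D₁} {B : Str S D₂} {Z : Set (Set (D₁ × D₂))}

lemma pZ_snd (hZ : IsBisim (σ ∩ τ) A B Z) {p : Set (D₁ × D₂)} (hp : p ∈ Z)
    {x y : D₁ × D₂} (hx : x ∈ p) (hy : y ∈ p) (h : x.1 = y.1) : x.2 = y.2 :=
  (hZ.2.1 p hp).2.2.1 x.1 x.2 y.2 (by simpa using hx) (by rw [h]; simpa using hy)

lemma pZ_fst (hZ : IsBisim (σ ∩ τ) A B Z) {p : Set (D₁ × D₂)} (hp : p ∈ Z)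
    {x y : D₁ × D₂} (hx : x ∈ p) (hy : y ∈ p) (h : x.2 = y.2) : x.1 = y.1 :=
  (hZ.2.1 p hp).2.2.2.1 x.1 y.1 x.2 (by simpa using hx)
    (by rw [h]; simpa using hy)

lemma tupInZ_const {k : ℕ} (hk : Nonempty (Fin k)) {x : D₁ × D₂}
    (hx : PairInZ Z x) : TupInZ Z (fun _ : Fin k => x) := by
  obtain ⟨p, hpZ, hxp, hdom⟩ := hx
  exact ⟨p, hpZ, fun _ => hxp, fun y hy => ⟨hk.some, hdom y hy⟩⟩

lemma tupInZ_congr {k l : ℕ} {r : Fin k → D₁ × D₂} {s : Fin l → D₁ × D₂}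
    (h1 : ∀ j, ∃ i, s j = r i) (h2 : ∀ i, ∃ j, r i = s j)
    (hT : TupInZ Z r) : TupInZ Z s := by
  obtain ⟨p, hpZ, hmem, hdom⟩ := hT
  refine ⟨p, hpZ, fun j => ?_, fun y hy => ?_⟩
  · obtain ⟨i, hi⟩ := h1 j; rw [hi]; exact hmem i
  · obtain ⟨i, hi⟩ := hdom y hy
    obtain ⟨j, hj⟩ := h2 i
    exact ⟨j, by rw [hi, hj]⟩

lemma rangeEq {k l : ℕ} {α γ : Type _} {r : Fin k → α} {s : Fin l → α} (f : α → γ)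
    (h1 : ∀ j, ∃ i, s j = r i) (h2 : ∀ i, ∃ j, r i = s j) :
    (Set.range fun j => f (s j)) = Set.range fun i => f (r i) := by
  ext x
  simp only [Set.mem_range]
  constructor
  · rintro ⟨j, hj⟩; obtain ⟨i, hi⟩ := h1 j; exact ⟨i, by rw [← hi]; exact hj⟩
  · rintro ⟨i, hi'⟩; obtain ⟨j, hj⟩ := h2 i; exact ⟨j, by rw [← hj]; exact hi'⟩

lemma tup_table (hZ : IsBisim (σ ∩ τ) A B Z) {R : S.Rel} (hR : R ∈ σ ∩ τ)
    {t : Fin (S.arity R) → D₁ × D₂} (hT : TupInZ Z t) :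
    (A R fun j => (t j).1) ↔ B R fun j => (t j).2 := by
  obtain ⟨p, hpZ, hmem, hdom⟩ := hT
  refine (hZ.2.1 p hpZ).2.2.2.2 R hR t hmem (Or.inl fun x hx => ?_)
  obtain ⟨j, hj⟩ := hdom x hx
  have h2 : x.2 = (t j).2 := pZ_snd hZ hpZ hx (hmem j) hj
  exact ⟨j, Prod.ext hj.symm h2.symm⟩

lemma live_inj1 (hZ : IsBisim (σ ∩ τ) A B Z) {X : Set (AmDom Z)}
    (hX : Live σ (Amalgam σ τ A B Z) X) :
    ∀ u ∈ X, ∀ u' ∈ X, u.1.1 = u'.1.1 → u = u' := by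
  intro u hu u' hu' h
  rcases hX.2 with hs | ⟨R, hR, r, hr, hXeq⟩
  · exact hs hu hu'
  · rw [hXeq] at hu hu'
    obtain ⟨i, hi⟩ := hu
    obtain ⟨i', hi'⟩ := hu'
    have hsnd : u.1.2 = u'.1.2 := by
      have key : ∀ {q : Set (D₁ × D₂)}, q ∈ Z → (∀ j, (r j).1 ∈ q) → u.1.2 = u'.1.2 := by
        intro q hq hm
        have h1 : u.1 ∈ q := hi ▸ hm i
        have h2 : u'.1 ∈ q := hi' ▸ hm i'
        exact pZ_snd hZ hq h1 h2 h
      rcases hr with ⟨_, _, ⟨q, hq, hm, _⟩⟩ | ⟨_, _, ⟨q, hq, hm, _⟩ | ⟨hLG, _⟩⟩ |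
        ⟨⟨_, hns⟩, _, _⟩
      · exact key hq hm
      · exact key hq hm
      · have h2 : (r i).1.2 = (r i').1.2 :=
          hLG i i' (show (r i).1.1 = (r i').1.1 by rw [hi, hi']; exact h)
        rw [hi, hi'] at h2; exact h2
      · exact absurd hR hns
    exact Subtype.ext (Prod.ext h hsnd)

lemma live_inj2 (hZ : IsBisim (σ ∩ τ) A B Z) {X : Set (AmDom Z)}
    (hX : Live τ (Amalgam σ τ A B Z) X) :
    ∀ u ∈ X, ∀ u' ∈ X, u.1.2 = u'.1.2 → u = u' := by
  intro u hu u' hu' h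
  rcases hX.2 with hs | ⟨R, hR, r, hr, hXeq⟩
  · exact hs hu hu'
  · rw [hXeq] at hu hu'
    obtain ⟨i, hi⟩ := hu
    obtain ⟨i', hi'⟩ := hu'
    have hfst : u.1.1 = u'.1.1 := by
      have key : ∀ {q : Set (D₁ × D₂)}, q ∈ Z → (∀ j, (r j).1 ∈ q) → u.1.1 = u'.1.1 := by
        intro q hq hm
        have h1 : u.1 ∈ q := hi ▸ hm i
        have h2 : u'.1 ∈ q := hi' ▸ hm i'
        exact pZ_fst hZ hq h1 h2 h
      rcases hr with ⟨_, _, ⟨q, hq, hm, _⟩⟩ | ⟨⟨_, hnτ⟩, _, _⟩ |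
        ⟨_, _, ⟨q, hq, hm, _⟩ | ⟨hRG, _⟩⟩
      · exact key hq hm
      · exact absurd hR hnτ
      · exact key hq hm
      · have h2 : (r i).1.1 = (r i').1.1 :=
          hRG i i' (show (r i).1.2 = (r i').1.2 by rw [hi, hi']; exact h)
        rw [hi, hi'] at h2; exact h2
    exact Subtype.ext (Prod.ext hfst h)

end Aux

open GFP in
/-- Given a uniform guarded `(σ ∩ τ)`-bisimulation `Z` between `A`
and `B`, the set `Z₁` consists of uniform partial `σ`-isomorphisms between the
amalgam `U` and `A`, and `Z₂` consists of uniform partial `τ`-isomorphisms between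
`U` and `B`. -/
theorem amalgam_projections_are_upisos (S : Sig) (σ τ : Set S.Rel) (D₁ D₂ : Type)
    (A : Str S D₁) (B : Str S D₂) (Z : Set (Set (D₁ × D₂)))
    (hZ : IsBisim (σ ∩ τ) A B Z) :
    (∀ p ∈ Z1 σ τ A B Z, IsUPIso σ (Amalgam σ τ A B Z) A p) ∧
    (∀ p ∈ Z2 σ τ A B Z, IsUPIso τ (Amalgam σ τ A B Z) B p) := by
  constructor
  · rintro p ⟨X, hX, rfl⟩
    have hfin : X.Finite := by
      rcases hX.2 with hs | ⟨R, _, r, _, hXeq⟩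
      · exact hs.finite
      · rw [hXeq]; exact Set.finite_range r
    refine ⟨hfin.image _, hX.1.image _, ?_, ?_, ?_⟩
    · rintro a b b' h1 h2
      obtain ⟨u, hu, he⟩ := h1
      obtain ⟨u', hu', he'⟩ := h2
      injection he with e1 e2
      injection he' with e1' e2'
      rw [← e2, ← e2', e1, e1']
    · rintro a a' b h1 h2
      obtain ⟨u, hu, he⟩ := h1
      obtain ⟨u', hu', he'⟩ := h2
      injection he with e1 e2
      injection he' with e1' e2'
      subst e1; subst e1'
      exact live_inj1 hZ hX u hu u' hu' (by rw [e2, e2'])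
    · intro R hR t ht hcov
      have hne : Nonempty (Fin (S.arity R)) := ⟨⟨0, S.arity_pos R⟩⟩
      have hmem : ∀ j, (t j).1 ∈ X := by
        intro j; obtain ⟨u, hu, he⟩ := ht j; rw [← he]; exact hu
      have hsnd : ∀ j, (t j).2 = (t j).1.1.1 := by
        intro j; obtain ⟨u, hu, he⟩ := ht j; rw [← he]
      have hrw : (fun j => (t j).2) = fun j => (t j).1.1.1 := funext hsnd
      rw [hrw]
      have build : TupInZ Z (fun j => (t j).1.1) → (A R fun j => (t j).1.1.1) →
          Amalgam σ τ A B Z R (fun j => (t j).1) := by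
        intro hT hA
        by_cases hτ : R ∈ τ
        · exact Or.inl ⟨⟨hR, hτ⟩, hA, hT⟩
        · exact Or.inr (Or.inl ⟨⟨hR, hτ⟩, hA, Or.inl hT⟩)
      constructor
      · rintro (⟨_, hA, _⟩ | ⟨_, hA, _⟩ | ⟨⟨_, hns⟩, _, _⟩)
        · exact hA
        · exact hA
        · exact absurd hR hns
      · intro hA
        have hconstT : (∀ j j', t j = t j') → Amalgam σ τ A B Z R (fun j => (t j).1) := by
          intro hc
          have hceq : (fun j => (t j).1.1) = fun _ : Fin (S.arity R) => (t hne.some).1.1 :=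
            funext fun j => congrArg (fun x : AmDom Z × D₁ => x.1.1) (hc j hne.some)
          exact build (by rw [hceq]; exact tupInZ_const hne (t hne.some).1.2) hA
        rcases hcov with hsurj | hconst
        · rcases hX.2 with hs | ⟨R', hR', r, hr, hXeq⟩
          · refine hconstT fun j j' => ?_
            have h12 := hs (hmem j) (hmem j')
            exact Prod.ext h12 (by rw [hsnd j, hsnd j', h12])
          · have hXsub : ∀ u ∈ X, ∃ j, (t j).1 = u := by
              intro u hu
              obtain ⟨j, hj⟩ := hsurj (u, u.1.1) ⟨u, hu, rfl⟩
              exact ⟨j, by rw [hj]⟩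
            have h1 : ∀ j, ∃ i, (t j).1 = r i := by
              intro j
              have hj := hmem j; rw [hXeq] at hj
              obtain ⟨i, hi⟩ := hj
              exact ⟨i, hi.symm⟩
            have h2 : ∀ i, ∃ j, r i = (t j).1 := by
              intro i
              obtain ⟨j, hj⟩ := hXsub (r i) (by rw [hXeq]; exact ⟨i, rfl⟩)
              exact ⟨j, hj.symm⟩
            have h1' : ∀ j, ∃ i, (t j).1.1 = (r i).1 := fun j =>
              ⟨(h1 j).choose, congrArg Subtype.val (h1 j).choose_spec⟩
            have h2' : ∀ i, ∃ j, (r i).1 = (t j).1.1 := fun i =>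
              ⟨(h2 i).choose, congrArg Subtype.val (h2 i).choose_spec⟩
            have hne' : Nonempty (Fin (S.arity R')) := ⟨⟨0, S.arity_pos R'⟩⟩
            rcases hr with ⟨_, _, hT⟩ | ⟨⟨_, hτ'⟩, _, hT | ⟨hLG, hnl⟩⟩ | ⟨⟨_, hns⟩, _, _⟩
            · exact build (tupInZ_congr h1' h2' hT) hA
            · exact build (tupInZ_congr h1' h2' hT) hA
            · have hre : (Set.range fun j => (t j).1.1.1) = Set.range fun i => (r i).1.1 :=
                rangeEq (fun u : AmDom Z => u.1.1) h1 h2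
              by_cases hτ : R ∈ τ
              · exact absurd ⟨⟨(r hne'.some).1.1, hne'.some, rfl⟩,
                  Or.inr ⟨R, ⟨hR, hτ⟩, fun j => (t j).1.1.1, hA, hre.symm⟩⟩ hnl
              · refine Or.inr (Or.inl ⟨⟨hR, hτ⟩, hA, Or.inr ⟨?_, ?_⟩⟩)
                · intro i j hij
                  have hij' : (t i).1.1.1 = (t j).1.1.1 := hij
                  obtain ⟨i', hi'⟩ := h1 i
                  obtain ⟨j', hj'⟩ := h1 j
                  have hs2 : (r i').1.2 = (r j').1.2 :=
                    hLG i' j' (show (r i').1.1 = (r j').1.1 by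
                      rw [← hi', ← hj']; exact hij')
                  show (t i).1.1.2 = (t j).1.1.2
                  rw [hi', hj']; exact hs2
                · show ¬ Live (σ ∩ τ) A (Set.range fun j => (t j).1.1.1)
                  rw [hre]; exact hnl
            · exact absurd hR' hns
        · exact hconstT hconst
  · rintro p ⟨X, hX, rfl⟩
    have hfin : X.Finite := by
      rcases hX.2 with hs | ⟨R, _, r, _, hXeq⟩
      · exact hs.finite
      · rw [hXeq]; exact Set.finite_range r
    refine ⟨hfin.image _, hX.1.image _, ?_, ?_, ?_⟩
    · rintro a b b' h1 h2
      obtain ⟨u, hu, he⟩ := h1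
      obtain ⟨u', hu', he'⟩ := h2
      injection he with e1 e2
      injection he' with e1' e2'
      rw [← e2, ← e2', e1, e1']
    · rintro a a' b h1 h2
      obtain ⟨u, hu, he⟩ := h1
      obtain ⟨u', hu', he'⟩ := h2
      injection he with e1 e2
      injection he' with e1' e2'
      subst e1; subst e1'
      exact live_inj2 hZ hX u hu u' hu' (by rw [e2, e2'])
    · intro R hR t ht hcov
      have hne : Nonempty (Fin (S.arity R)) := ⟨⟨0, S.arity_pos R⟩⟩
      have hmem : ∀ j, (t j).1 ∈ X := by
        intro j; obtain ⟨u, hu, he⟩ := ht j; rw [← he]; exact hu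
      have hsnd : ∀ j, (t j).2 = (t j).1.1.2 := by
        intro j; obtain ⟨u, hu, he⟩ := ht j; rw [← he]
      have hrw : (fun j => (t j).2) = fun j => (t j).1.1.2 := funext hsnd
      rw [hrw]
      constructor
      · rintro (⟨hστ, hA, hT⟩ | ⟨⟨_, hnτ⟩, _, _⟩ | ⟨_, hB', _⟩)
        · exact (tup_table hZ hστ hT).mp hA
        · exact absurd hR hnτ
        · exact hB'
      · intro hB
        have build2 : TupInZ Z (fun j => (t j).1.1) →
            Amalgam σ τ A B Z R (fun j => (t j).1) := by
          intro hT
          by_cases hσ : R ∈ σ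
          · exact Or.inl ⟨⟨hσ, hR⟩, (tup_table hZ ⟨hσ, hR⟩ hT).mpr hB, hT⟩
          · exact Or.inr (Or.inr ⟨⟨hR, hσ⟩, hB, Or.inl hT⟩)
        have hconstT : (∀ j j', t j = t j') → Amalgam σ τ A B Z R (fun j => (t j).1) := by
          intro hc
          have hceq : (fun j => (t j).1.1) = fun _ : Fin (S.arity R) => (t hne.some).1.1 :=
            funext fun j => congrArg (fun x : AmDom Z × D₂ => x.1.1) (hc j hne.some)
          exact build2 (by rw [hceq]; exact tupInZ_const hne (t hne.some).1.2)
        rcases hcov with hsurj | hconst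
        · rcases hX.2 with hs | ⟨R', hR', r, hr, hXeq⟩
          · refine hconstT fun j j' => ?_
            have h12 := hs (hmem j) (hmem j')
            exact Prod.ext h12 (by rw [hsnd j, hsnd j', h12])
          · have hXsub : ∀ u ∈ X, ∃ j, (t j).1 = u := by
              intro u hu
              obtain ⟨j, hj⟩ := hsurj (u, u.1.2) ⟨u, hu, rfl⟩
              exact ⟨j, by rw [hj]⟩
            have h1 : ∀ j, ∃ i, (t j).1 = r i := by
              intro j
              have hj := hmem j; rw [hXeq] at hj
              obtain ⟨i, hi⟩ := hj
              exact ⟨i, hi.symm⟩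
            have h2 : ∀ i, ∃ j, r i = (t j).1 := by
              intro i
              obtain ⟨j, hj⟩ := hXsub (r i) (by rw [hXeq]; exact ⟨i, rfl⟩)
              exact ⟨j, hj.symm⟩
            have h1' : ∀ j, ∃ i, (t j).1.1 = (r i).1 := fun j =>
              ⟨(h1 j).choose, congrArg Subtype.val (h1 j).choose_spec⟩
            have h2' : ∀ i, ∃ j, (r i).1 = (t j).1.1 := fun i =>
              ⟨(h2 i).choose, congrArg Subtype.val (h2 i).choose_spec⟩
            have hne' : Nonempty (Fin (S.arity R')) := ⟨⟨0, S.arity_pos R'⟩⟩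
            rcases hr with ⟨_, _, hT⟩ | ⟨⟨_, hnτ'⟩, _, _⟩ | ⟨_, _, hT | ⟨hRG, hnl⟩⟩
            · exact build2 (tupInZ_congr h1' h2' hT)
            · exact absurd hR' hnτ'
            · exact build2 (tupInZ_congr h1' h2' hT)
            · have hre : (Set.range fun j => (t j).1.1.2) = Set.range fun i => (r i).1.2 :=
                rangeEq (fun u : AmDom Z => u.1.2) h1 h2
              by_cases hσ : R ∈ σ
              · exact absurd ⟨⟨(r hne'.some).1.2, hne'.some, rfl⟩,
                  Or.inr ⟨R, ⟨hσ, hR⟩, fun j => (t j).1.1.2, hB, hre.symm⟩⟩ hnl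
              · refine Or.inr (Or.inr ⟨⟨hR, hσ⟩, hB, Or.inr ⟨?_, ?_⟩⟩)
                · intro i j hij
                  have hij' : (t i).1.1.2 = (t j).1.1.2 := hij
                  obtain ⟨i', hi'⟩ := h1 i
                  obtain ⟨j', hj'⟩ := h1 j
                  have hs2 : (r i').1.1 = (r j').1.1 :=
                    hRG i' j' (show (r i').1.2 = (r j').1.2 by
                      rw [← hi', ← hj']; exact hij')
                  show (t i).1.1.1 = (t j).1.1.1
                  rw [hi', hj']; exact hs2
                · show ¬ Live (σ ∩ τ) B (Set.range fun j => (t j).1.1.2)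
                  rw [hre]; exact hnl
        · exact hconstT hconst
end
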